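/- In the universal length-two setting, with c = (x+vt, −y, −z, −t) the first row of Φ and with matrices a, b as above, the rows of Φ are given by: row 2 of Φ equals c·a, row 3 equals c·b, and row 4 equals −c·a·b. -/

import Mathlib

/-! Right multiplication by `a` and `b` only permutes and rescales coordinates, so `c·a`, `c·b` and
`c·a·b` are explicit row vectors, which are compared entrywise with the rows of `Φ = xI - Ξ`. -/

open MvPolynomial

noncomputable section

abbrev S8 : Type := MvPolynomial (Fin 7) ℂ

def x8 : S8 := X 0
def y8 : S8 := X 1
def z8 : S8 := X 2
def w8 : S8 := X 3
def u8 : S8 := X 4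
def v8 : S8 := X 5
def t8 : S8 := X 6

def Xi8 : Matrix (Fin 4) (Fin 4) S8 :=
  !![-v8*t8, y8, z8, t8;
     -u8*y8 - 2*v8*z8, v8*t8, -u8*t8, z8;
     -w8*z8, w8*t8, -v8*t8, -y8;
     -u8*w8*t8, -w8*z8, u8*y8 + 2*v8*z8, v8*t8]

def Phi8 : Matrix (Fin 4) (Fin 4) S8 := x8 • (1 : Matrix (Fin 4) (Fin 4) S8) - Xi8

def a8 : Matrix (Fin 4) (Fin 4) S8 :=
  !![0, 1, 0, 0; -u8, 0, 0, 0; -2*v8, 0, 0, 1; 0, 2*v8, -u8, 0]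

def b8 : Matrix (Fin 4) (Fin 4) S8 :=
  !![0, 0, 1, 0; 0, 0, 0, -1; -w8, 0, 0, 0; 0, w8, 0, 0]

def c8 : Fin 4 → S8 := ![x8 + v8*t8, -y8, -z8, -t8]

open Matrix

theorem vecMul_a8 (p : Fin 4 → S8) :
    vecMul p a8 = ![-(u8 * p 1) - 2 * v8 * p 2, p 0 + 2 * v8 * p 3, -(u8 * p 3), p 2] := by
  funext j
  fin_cases j <;> simp [a8, vecMul, dotProduct, Fin.sum_univ_four] <;> ring

theorem vecMul_b8 (p : Fin 4 → S8) :
    vecMul p b8 = ![-(w8 * p 2), w8 * p 3, p 0, -p 1] := by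
  funext j
  fin_cases j <;> simp [b8, vecMul, dotProduct, Fin.sum_univ_four, mul_comm]

theorem Phi8_row_one :
    (fun j => Phi8 1 j) = ![u8 * y8 + 2 * v8 * z8, x8 - v8 * t8, u8 * t8, -z8] := by
  funext j
  fin_cases j <;> simp [Phi8, Xi8, one_apply]
  ring

theorem Phi8_row_two :
    (fun j => Phi8 2 j) = ![w8 * z8, -(w8 * t8), x8 + v8 * t8, y8] := by
  funext j
  fin_cases j <;> simp [Phi8, Xi8, one_apply]

theorem Phi8_row_three :
    (fun j => Phi8 3 j) = ![u8 * w8 * t8, w8 * z8, -(u8 * y8) - 2 * v8 * z8, x8 - v8 * t8] := by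
  funext j
  fin_cases j <;> simp [Phi8, Xi8, one_apply]
  ring

theorem vecMul_c8_a8 :
    vecMul c8 a8 = ![u8 * y8 + 2 * v8 * z8, x8 - v8 * t8, u8 * t8, -z8] := by
  rw [vecMul_a8]
  simp [c8]
  ring

theorem vecMul_c8_b8 : vecMul c8 b8 = ![w8 * z8, -(w8 * t8), x8 + v8 * t8, y8] := by
  simp [vecMul_b8, c8]

theorem vecMul_c8_a8_b8 :
    vecMul (vecMul c8 a8) b8 =
      -![u8 * w8 * t8, w8 * z8, -(u8 * y8) - 2 * v8 * z8, x8 - v8 * t8] := by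
  rw [vecMul_b8, vecMul_c8_a8]
  funext j
  fin_cases j <;> simp <;> ring

theorem rows_of_Phi_from_c :
    (fun j => Phi8 1 j) = Matrix.vecMul c8 a8 ∧
    (fun j => Phi8 2 j) = Matrix.vecMul c8 b8 ∧
    (fun j => Phi8 3 j) = -(Matrix.vecMul (Matrix.vecMul c8 a8) b8) := by
  rw [vecMul_c8_a8_b8, vecMul_c8_a8, vecMul_c8_b8, neg_neg]
  exact ⟨Phi8_row_one, Phi8_row_two, Phi8_row_three⟩

end
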